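/- arXiv:1512.08141 — 3 statements merged into one kernel-verified Lean document; each statement's English description precedes it below -/
import Mathlib

section
/- Let n and d be integers with n ≥ 2d ≥ 2, and let G = C_n(1,2,...,d) be the circulant graph with generating set {1,2,...,d}. Then G satisfies Serre's condition S_2 if and only if (n ≤ 3d+2 and n ≠ 2d+2) or n = 4d+3. -/
/-- The circulant graph `C_n(S)` on vertex set `ZMod n`: `i` and `j` are adjacent
iff `i ≠ j` and `|i-j| ∈ S` or `n - |i-j| ∈ S` (encoded via `ZMod` subtraction). -/
def circulantGraph (n : ℕ) (S : Set ℕ) : SimpleGraph (ZMod n) where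
  Adj i j := i ≠ j ∧ ((i - j).val ∈ S ∨ (j - i).val ∈ S)
  symm := ⟨fun i j h => ⟨h.1.symm, h.2.symm⟩⟩
  loopless := ⟨fun i h => h.1 rfl⟩

/-- An (abstract) simplicial complex on vertex type `V`, as a downward closed
family of finite subsets of `V`. -/
def IsComplex {V : Type*} (Δ : Set (Finset V)) : Prop :=
  ∀ F ∈ Δ, ∀ G ⊆ F, G ∈ Δ

/-- The link of a face `F` in the complex `Δ`. -/
def linkC {V : Type*} [DecidableEq V] (Δ : Set (Finset V)) (F : Finset V) : Set (Finset V) :=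
  {G | Disjoint G F ∧ G ∪ F ∈ Δ}

/-- A complex is connected if any two of its vertices can be joined by a path
of 1-dimensional faces. -/
def ComplexConnected {V : Type*} [DecidableEq V] (Δ : Set (Finset V)) : Prop :=
  ∀ u, ({u} : Finset V) ∈ Δ → ∀ w, ({w} : Finset V) ∈ Δ →
    Relation.ReflTransGen (fun a b => a ≠ b ∧ ({a, b} : Finset V) ∈ Δ) u w

/-- Serre's condition `S₂` for a simplicial complex: the link of every face of the
complex whose link has dimension at least `1` is connected. -/
def IsS2 {V : Type*} [DecidableEq V] (Δ : Set (Finset V)) : Prop :=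
  ∀ F ∈ Δ, (∃ G ∈ linkC Δ F, 2 ≤ G.card) → ComplexConnected (linkC Δ F)

/-- The independence complex of a graph: faces are the (finite) independent sets. -/
def IndComplex {V : Type*} (G : SimpleGraph V) : Set (Finset V) :=
  {F | ∀ u ∈ F, ∀ v ∈ F, ¬ G.Adj u v}

/-- A graph is `S₂` if its independence complex is `S₂`. -/
def GraphS2 {V : Type*} [DecidableEq V] (G : SimpleGraph V) : Prop :=
  IsS2 (IndComplex G)

/-- The facets (maximal faces) of a complex. -/
def facetsOf {V : Type*} (Δ : Set (Finset V)) : Set (Finset V) :=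
  {F | F ∈ Δ ∧ ∀ G ∈ Δ, F ⊆ G → F = G}

/-- A graph is well-covered if all its maximal independent sets have the same cardinality. -/
def WellCovered {V : Type*} (G : SimpleGraph V) : Prop :=
  ∀ A ∈ facetsOf (IndComplex G), ∀ B ∈ facetsOf (IndComplex G), A.card = B.card

/-- A complex is pure if all its facets have the same cardinality. -/
def IsPure {V : Type*} (Δ : Set (Finset V)) : Prop :=
  ∀ F ∈ facetsOf Δ, ∀ G ∈ facetsOf Δ, F.card = G.card

/-- `L` is a shelling order of `Δ`: a linear order `F₁, …, Fₛ` of all the facets of `Δ`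
such that for all `i < j` there are `v ∈ Fⱼ \ Fᵢ` and `l < j` with `Fⱼ \ F_l = {v}`. -/
def IsShellingOrder {V : Type*} [DecidableEq V] (Δ : Set (Finset V)) (L : List (Finset V)) : Prop :=
  L.Nodup ∧ (∀ F, F ∈ facetsOf Δ ↔ F ∈ L) ∧
    ∀ i j : Fin L.length, i < j →
      ∃ v ∈ L.get j \ L.get i, ∃ l : Fin L.length, l < j ∧ L.get j \ L.get l = {v}

/-- A complex is shellable if its facets admit a shelling order. -/
def IsShellable {V : Type*} [DecidableEq V] (Δ : Set (Finset V)) : Prop :=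
  ∃ L : List (Finset V), IsShellingOrder Δ L

/-- A pure complex is strongly connected if any two facets are joined by a sequence of
facets in which consecutive facets intersect in one element fewer than their cardinality. -/
def StronglyConnectedComplex {V : Type*} [DecidableEq V] (Δ : Set (Finset V)) : Prop :=
  ∀ F ∈ facetsOf Δ, ∀ F' ∈ facetsOf Δ,
    Relation.ReflTransGen
      (fun A B => A ∈ facetsOf Δ ∧ B ∈ facetsOf Δ ∧ (A ∩ B).card = A.card - 1) F F'

/-- The join of two simplicial complexes (on disjoint vertex sets). -/
def joinC {V : Type*} [DecidableEq V] (Δ₁ Δ₂ : Set (Finset V)) : Set (Finset V) :=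
  {F | ∃ F₁ ∈ Δ₁, ∃ F₂ ∈ Δ₂, F = F₁ ∪ F₂}

/-- The generating set of the one-paired circulant graph `C(n; a, b)`. -/
def onePairedSet (n a b : ℕ) : Set ℕ :=
  {d | 1 ≤ d ∧ d ≤ n / 2 ∧ a ∣ d ∧ ¬ (a * b ∣ d)}

/-!
Two distinct vertices of `C_n(1,…,d)` are non-adjacent iff their cyclic distance is at least
`d + 1`. Hence the arcs `v + [0, d]` of the vertices `v` of an independent set are disjoint, and
independent sets have at most `n / (d + 1)` vertices. So for `n ≤ 3d + 2` only the link of the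
empty face can have dimension `≥ 1`: `Ind(C_n)` has no edge for `n ≤ 2d + 1`, is the perfect
matching `v ↔ v + d + 1` for `n = 2d + 2`, and is connected for `n ≥ 2d + 3` through the paths
`u, u + d + 2, u + 1`. For `n = 4d + 3` faces have at most three vertices, and the link of a
vertex `v` consists of the `v + c` with `d + 1 ≤ c ≤ 3d + 2`, each joined to one end of the edge
`{v + d + 1, v + 3d + 2}`.

For every other `n ≥ 3d + 3` some link is disconnected. Take `T ⊆ [0, M]` containing `0` and
`M`, with gaps at least `d + 1` and every point of `[0, M]` within `d` of `T`, where
`M + 3d + 3 ≤ n ≤ M + 4d + 2`; such `T` exist for `M = 0` and for `M ≥ d + 1`, and a suitable `M`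
fails to exist only for `n = 4d + 3`. Then `T ∪ {M + 2d + 1}` is a maximal independent set, so
`M + 2d + 1` is an isolated vertex of the link of `T`, which also contains the edge
`{M + d + 1, M + 2d + 2}`.
-/

section Complex

variable {V : Type*} [DecidableEq V]

def skeletonAdj (Δ : Set (Finset V)) (a b : V) : Prop :=
  a ≠ b ∧ ({a, b} : Finset V) ∈ Δ

theorem skeletonAdj.symm {Δ : Set (Finset V)} {a b : V} (h : skeletonAdj Δ a b) :
    skeletonAdj Δ b a :=
  ⟨h.1.symm, by rw [Finset.pair_comm]; exact h.2⟩

theorem linkC_empty (Δ : Set (Finset V)) : linkC Δ ∅ = Δ := by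
  ext F
  simp [linkC]

theorem IsComplex.linkC {Δ : Set (Finset V)} (hΔ : IsComplex Δ) (F : Finset V) :
    IsComplex (linkC Δ F) := fun _ ⟨hdisj, hmem⟩ _ hsub =>
  ⟨hdisj.mono_left hsub, hΔ _ hmem _ (Finset.union_subset_union hsub le_rfl)⟩

theorem complexConnected_of_reflTransGen {Δ : Set (Finset V)} (c : V)
    (h : ∀ u, ({u} : Finset V) ∈ Δ → Relation.ReflTransGen (skeletonAdj Δ) u c) :
    ComplexConnected Δ := fun u hu w hw =>
  (h u hu).trans <|
    Relation.ReflTransGen.mono (fun _ _ hab => skeletonAdj.symm hab) _ _ (h w hw).swap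

theorem isS2_of_card_le {Δ : Set (Finset V)} (k : ℕ) (hcard : ∀ F ∈ Δ, F.card ≤ k)
    (hconn : ∀ F ∈ Δ, F.card + 2 ≤ k → ComplexConnected (linkC Δ F)) : IsS2 Δ := by
  rintro F hF ⟨E, ⟨hdisj, hE⟩, hE2⟩
  have := hcard _ hE
  rw [Finset.card_union_of_disjoint hdisj] at this
  exact hconn F hF (by omega)

theorem not_complexConnected_of_closed {Δ : Set (Finset V)} (S : Set V) {u w : V}
    (hu : {u} ∈ Δ) (huS : u ∈ S) (hw : {w} ∈ Δ) (hwS : w ∉ S)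
    (hS : ∀ a ∈ S, ∀ b, skeletonAdj Δ a b → b ∈ S) : ¬ ComplexConnected Δ := by
  intro hconn
  have hreach : Relation.ReflTransGen (skeletonAdj Δ) u w := hconn u hu w hw
  refine hwS ?_
  clear hw hwS
  induction hreach with
  | refl => exact huS
  | tail _ hbc ih => exact hS _ ih _ hbc

theorem not_isS2_of_facet {Δ : Set (Finset V)} (hΔ : IsComplex Δ) {F E : Finset V} {a : V}
    (haF : a ∉ F) (hA : insert a F ∈ facetsOf Δ) (hE : E ∈ linkC Δ F) (hE2 : 2 ≤ E.card) :
    ¬ IsS2 Δ := by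
  intro hS2
  obtain ⟨x, hxE, hxa⟩ := Finset.exists_mem_ne hE2 a
  refine not_complexConnected_of_closed (Δ := linkC Δ F) {a}
    ⟨Finset.disjoint_singleton_left.mpr haF, by rw [← Finset.insert_eq]; exact hA.1⟩ rfl
    (hΔ.linkC F E hE {x} (Finset.singleton_subset_iff.mpr hxE)) hxa ?_
    (hS2 F (hΔ _ hA.1 _ (Finset.subset_insert a F)) ⟨E, hE, hE2⟩)
  rintro a' ha' b ⟨hab, hdisj, hmem⟩
  rw [Set.mem_singleton_iff] at ha'
  subst a'
  have hsub : insert a F ⊆ {a, b} ∪ F :=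
    Finset.insert_subset (by simp) Finset.subset_union_right
  have hb : b ∈ insert a F := by rw [hA.2 _ hmem hsub]; simp
  rcases Finset.mem_insert.mp hb with rfl | hbF
  · exact absurd rfl hab
  · exact (Finset.disjoint_left.mp hdisj (by simp) hbF).elim

end Complex

section IndComplex

variable {V : Type*} (G : SimpleGraph V)

theorem isComplex_indComplex : IsComplex (IndComplex G) :=
  fun _ hF _ hsub u hu v hv => hF u (hsub hu) v (hsub hv)

theorem pair_mem_indComplex_iff {a b : V} [DecidableEq V] :
    ({a, b} : Finset V) ∈ IndComplex G ↔ ¬ G.Adj a b := by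
  simp [IndComplex, G.adj_comm b a]

theorem insert_mem_indComplex_iff [DecidableEq V] {a : V} {F : Finset V} :
    insert a F ∈ IndComplex G ↔ (∀ b ∈ F, ¬ G.Adj a b) ∧ F ∈ IndComplex G := by
  simp only [IndComplex, Set.mem_ofPred_eq, Finset.forall_mem_insert, G.irrefl,
    not_false_eq_true, true_and]
  constructor
  · rintro ⟨h₁, h₂⟩
    exact ⟨h₁, fun u hu => (h₂ u hu).2⟩
  · rintro ⟨h₁, h₂⟩
    exact ⟨h₁, fun u hu => ⟨fun h => h₁ u hu h.symm, h₂ u hu⟩⟩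

theorem mem_facetsOf_indComplex {A : Finset V} (hA : A ∈ IndComplex G)
    (hdom : ∀ z ∉ A, ∃ w ∈ A, G.Adj z w) : A ∈ facetsOf (IndComplex G) := by
  refine ⟨hA, fun B hB hAB => ?_⟩
  by_contra hne
  obtain ⟨z, hzB, hzA⟩ := Finset.exists_of_ssubset (lt_of_le_of_ne hAB hne)
  obtain ⟨w, hwA, hzw⟩ := hdom z hzA
  exact hB z hzB w (hAB hwA) hzw

end IndComplex

theorem ZMod.natCast_inj_of_lt {n a b : ℕ} (ha : a < n) (hb : b < n) :
    (a : ZMod n) = b ↔ a = b :=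
  (CharP.natCast_injOn_Iio (ZMod n) n).eq_iff ha hb

theorem ZMod.exists_eq_add_natCast {n : ℕ} [NeZero n] (a b : ZMod n) : ∃ c < n, b = a + c :=
  ⟨(b - a).val, ZMod.val_lt _, by simp⟩


structure IsSeparatedNet (d M : ℕ) (T : Finset ℕ) : Prop where
  zero_mem : 0 ∈ T
  top_mem : M ∈ T
  le_top : ∀ q ∈ T, q ≤ M
  separated : ∀ p ∈ T, ∀ q ∈ T, p < q → d + 1 ≤ q - p
  dense : ∀ p ≤ M, ∃ q ∈ T, p ≤ q + d ∧ q ≤ p + d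

theorem exists_isSeparatedNet (d M : ℕ) (hM : M = 0 ∨ d + 1 ≤ M) :
    ∃ T, IsSeparatedNet d M T := by
  induction M using Nat.strong_induction_on with
  | _ M ih =>
  rcases hM with rfl | hM
  · exact ⟨{0}, by simp, by simp, by simp, by simp, fun _ _ => ⟨0, by simp, by omega, by omega⟩⟩
  by_cases hM' : M ≤ 2 * d + 1
  · refine ⟨{0, M}, by simp, by simp, by simp, ?_, fun p hp => ?_⟩
    · simp only [Finset.mem_insert, Finset.mem_singleton]
      rintro p (rfl | rfl) q (rfl | rfl) hpq <;> omega
    · rcases le_or_gt p d with h | h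
      · exact ⟨0, by simp, by omega, by omega⟩
      · exact ⟨M, by simp, by omega, by omega⟩
  obtain ⟨T, hT⟩ := ih (M - (d + 1)) (by omega) (Or.inr (by omega))
  refine ⟨insert M T, Finset.mem_insert_of_mem hT.zero_mem, Finset.mem_insert_self M T, ?_, ?_,
    fun p hp => ?_⟩
  · simp only [Finset.forall_mem_insert, le_refl, true_and]
    exact fun q hq => (hT.le_top q hq).trans (by omega)
  · simp only [Finset.mem_insert]
    rintro p (rfl | hp) q (rfl | hq) hpq
    · omega
    · have := hT.le_top q hq; omega
    · have := hT.le_top p hp; omega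
    · exact hT.separated p hp q hq hpq
  · rcases le_or_gt p (M - (d + 1)) with h | h
    · obtain ⟨q, hq, h⟩ := hT.dense p h
      exact ⟨q, Finset.mem_insert_of_mem hq, h⟩
    · exact ⟨M, Finset.mem_insert_self M T, by omega, by omega⟩


namespace circulantGraph

variable {n d : ℕ}

local notation "Γ" => circulantGraph n (Set.Icc 1 d)

theorem adj_add_natCast_iff [NeZero n] (a : ZMod n) {c : ℕ} (hc : c < n) :
    (Γ).Adj a (a + c) ↔ 0 < c ∧ (c ≤ d ∨ n ≤ c + d) := by
  rcases Nat.eq_zero_or_pos c with rfl | hc₀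
  · simp [circulantGraph]
  have hc' : (c : ZMod n) ≠ 0 := by
    rw [← Nat.cast_zero, Ne, ZMod.natCast_inj_of_lt hc (NeZero.pos n)]
    omega
  have h₁ : (a + c - a).val = c := by rw [add_sub_cancel_left, ZMod.val_natCast_of_lt hc]
  have h₂ : (a - (a + c)).val = n - c := by
    rw [sub_add_cancel_left, ZMod.neg_val, if_neg hc', ZMod.val_natCast_of_lt hc]
  have hne : a ≠ a + c := by rwa [ne_eq, left_eq_add]
  simp only [circulantGraph, Set.mem_Icc, h₁, h₂, ne_eq, hne, not_false_eq_true, true_and]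
  omega

theorem adj_natCast_iff [NeZero n] {p q : ℕ} (hpq : p < q) (hq : q < n) :
    (Γ).Adj p q ↔ q - p ≤ d ∨ n ≤ q - p + d := by
  have := adj_add_natCast_iff (d := d) (p : ZMod n) (c := q - p) (by omega)
  rwa [← Nat.cast_add, Nat.add_sub_cancel' hpq.le, and_iff_right (by omega)] at this

theorem adj_natCast_of_le [NeZero n] {p q : ℕ} (hp : p < n) (hq : q < n) (hpq : p ≠ q)
    (h₁ : p ≤ q + d) (h₂ : q ≤ p + d) : (Γ).Adj p q := by
  rcases Nat.lt_or_gt_of_ne hpq with h | h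
  · exact (adj_natCast_iff h hq).mpr (Or.inl (by omega))
  · exact ((adj_natCast_iff h hp).mpr (Or.inl (by omega))).symm

theorem not_adj_add_natCast [NeZero n] (a : ZMod n) {c : ℕ} (h₁ : d + 1 ≤ c)
    (h₂ : c + d + 1 ≤ n) : ¬ (Γ).Adj a (a + c) := by
  rw [adj_add_natCast_iff a (by omega)]
  omega

theorem exists_eq_add_natCast_of_not_adj [NeZero n] {a b : ZMod n} (hab : a ≠ b)
    (h : ¬ (Γ).Adj a b) : ∃ c : ℕ, b = a + c ∧ d + 1 ≤ c ∧ c + d + 1 ≤ n := by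
  obtain ⟨c, hc, rfl⟩ := ZMod.exists_eq_add_natCast a b
  have hc₀ : c ≠ 0 := by rintro rfl; simp at hab
  rw [adj_add_natCast_iff a hc] at h
  exact ⟨c, rfl, by omega, by omega⟩

theorem skeletonAdj_add_natCast [NeZero n] (a : ZMod n) {c : ℕ} (h₁ : d + 1 ≤ c)
    (h₂ : c + d + 1 ≤ n) : skeletonAdj (IndComplex Γ) a (a + c) := by
  refine ⟨fun h => ?_, (pair_mem_indComplex_iff _).mpr (not_adj_add_natCast a h₁ h₂)⟩
  rw [left_eq_add, ← Nat.cast_zero, ZMod.natCast_inj_of_lt (by omega) (by omega)] at h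
  omega

theorem image_natCast_mem_indComplex [NeZero n] {T : Finset ℕ}
    (hsep : ∀ p ∈ T, ∀ q ∈ T, p < q → d + 1 ≤ q - p) (hle : ∀ q ∈ T, q + d + 1 ≤ n) :
    T.image (Nat.cast : ℕ → ZMod n) ∈ IndComplex Γ := by
  simp only [IndComplex, Finset.mem_image, Set.mem_ofPred_eq]
  rintro _ ⟨p, hp, rfl⟩ _ ⟨q, hq, rfl⟩
  have hlt : ∀ p ∈ T, ∀ q ∈ T, p < q → ¬ (Γ).Adj p q := fun p hp q hq hpq => by
    have := hle q hq
    rw [adj_natCast_iff hpq (by omega)]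
    have := hsep p hp q hq hpq
    omega
  rcases lt_trichotomy p q with h | rfl | h
  · exact hlt p hp q hq h
  · exact (Γ).loopless.irrefl _
  · exact fun hadj => hlt q hq p hp h hadj.symm

theorem card_mul_le_of_mem_indComplex [NeZero n] (hdn : d < n) {F : Finset (ZMod n)}
    (hF : F ∈ IndComplex Γ) : F.card * (d + 1) ≤ n := by
  have hinj : ∀ v ∈ F, ∀ w ∈ F, ∀ i j : ℕ, i ≤ j → j ≤ d → v + i = w + j → v = w ∧ i = j := by
    intro v hv w hw i j hij hjd h
    have hvw : v = w + ((j - i : ℕ) : ZMod n) := by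
      rw [Nat.cast_sub hij]
      linear_combination h
    by_cases hji : j - i = 0
    · exact ⟨by simpa [hji] using hvw, by omega⟩
    · have hadj := (adj_add_natCast_iff (d := d) w (c := j - i) (by omega)).mpr
        ⟨by omega, Or.inl (by omega)⟩
      rw [← hvw] at hadj
      exact (hF w hw v hv hadj).elim
  calc F.card * (d + 1) = (F ×ˢ Finset.range (d + 1)).card := by simp
    _ ≤ (Finset.univ : Finset (ZMod n)).card := by
      refine Finset.card_le_card_of_injOn (fun x => x.1 + x.2) (fun _ _ => Finset.mem_univ _) ?_
      rintro ⟨v, i⟩ hvi ⟨w, j⟩ hwj h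
      simp only [Finset.coe_product, Set.mem_prod, Finset.mem_coe, Finset.mem_range] at hvi hwj h
      rcases le_total i j with hij | hij
      · obtain ⟨rfl, rfl⟩ := hinj v hvi.1 w hwj.1 i j hij (by omega) h
        rfl
      · obtain ⟨rfl, rfl⟩ := hinj w hwj.1 v hvi.1 j i hij (by omega) h.symm
        rfl
    _ = n := ZMod.card n

theorem card_le_of_mem_indComplex [NeZero n] (hdn : d < n) {k : ℕ}
    (hk : n < (k + 1) * (d + 1)) {F : Finset (ZMod n)} (hF : F ∈ IndComplex Γ) : F.card ≤ k := by
  by_contra! h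
  have h₁ : (k + 1) * (d + 1) ≤ F.card * (d + 1) := Nat.mul_le_mul_right _ h
  have h₂ := card_mul_le_of_mem_indComplex hdn hF
  linarith

theorem complexConnected_indComplex [NeZero n] (h : 2 * d + 3 ≤ n) :
    ComplexConnected (IndComplex Γ) := by
  have hsucc : ∀ u : ZMod n, Relation.ReflTransGen (skeletonAdj (IndComplex Γ)) (u + 1) u := by
    intro u
    have h₁ := skeletonAdj_add_natCast (d := d) (u + 1) (c := d + 1) le_rfl (by omega)
    have h₂ := skeletonAdj_add_natCast (d := d) u (c := d + 2) (by omega) (by omega)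
    rw [add_assoc, show (1 : ZMod n) + ((d + 1 : ℕ) : ZMod n) = ((d + 2 : ℕ) : ZMod n) by
      push_cast; ring] at h₁
    exact .head h₁ (.single h₂.symm)
  have hadd : ∀ (m : ℕ) (u : ZMod n),
      Relation.ReflTransGen (skeletonAdj (IndComplex Γ)) (u + m) u := by
    intro m u
    induction m with
    | zero => simpa using .refl
    | succ m ih => rw [Nat.cast_succ, ← add_assoc]; exact (hsucc _).trans ih
  refine complexConnected_of_reflTransGen 0 fun u _ => ?_
  simpa using hadd u.val 0

theorem skeletonAdj_linkC_singleton [NeZero n] (v : ZMod n) {c c' : ℕ} (hc : d + 1 ≤ c)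
    (hcc' : c + d + 1 ≤ c') (hc' : c' + d + 1 ≤ n) :
    skeletonAdj (linkC (IndComplex Γ) {v}) (v + (c : ZMod n)) (v + (c' : ZMod n)) := by
  have hvc := skeletonAdj_add_natCast (d := d) v hc (by omega)
  have hvc' := skeletonAdj_add_natCast (d := d) v (c := c') (by omega) hc'
  have hcc := skeletonAdj_add_natCast (d := d) (v + (c : ZMod n)) (c := c' - c)
    (by omega) (by omega)
  rw [add_assoc, ← Nat.cast_add, Nat.add_sub_cancel' (by omega)] at hcc
  refine ⟨hcc.1, ?_, ?_⟩
  · simp only [Finset.disjoint_singleton_right, Finset.mem_insert, Finset.mem_singleton, not_or]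
    exact ⟨hvc.1, hvc'.1⟩
  rw [Finset.insert_union, Finset.singleton_union, insert_mem_indComplex_iff,
    insert_mem_indComplex_iff]
  have hvc₂ := (pair_mem_indComplex_iff _).mp hvc.2
  have hvc'₂ := (pair_mem_indComplex_iff _).mp hvc'.2
  have hcc₂ := (pair_mem_indComplex_iff _).mp hcc.2
  simp only [Finset.forall_mem_insert, Finset.mem_singleton, forall_eq]
  exact ⟨⟨hcc₂, fun h => hvc₂ h.symm⟩, fun h => hvc'₂ h.symm, by simp [IndComplex]⟩

theorem complexConnected_linkC_singleton [NeZero n] (hn : n = 4 * d + 3) (v : ZMod n) :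
    ComplexConnected (linkC (IndComplex Γ) {v}) := by
  have hub := skeletonAdj_linkC_singleton (d := d) v (c := d + 1) (c' := 3 * d + 2) le_rfl
    (by omega) (by omega)
  refine complexConnected_of_reflTransGen (v + ((3 * d + 2 : ℕ) : ZMod n))
    fun z ⟨hdisj, hmem⟩ => ?_
  rw [← Finset.insert_eq, pair_mem_indComplex_iff] at hmem
  obtain ⟨c, rfl, hc₁, hc₂⟩ := exists_eq_add_natCast_of_not_adj
    (Finset.disjoint_singleton.mp hdisj).symm (mt SimpleGraph.Adj.symm hmem)
  rcases le_or_gt c (2 * d + 1) with hc | hc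
  · exact .single (skeletonAdj_linkC_singleton v hc₁ (by omega) (by omega))
  · exact .head (skeletonAdj_linkC_singleton v le_rfl (by omega) (by omega)).symm (.single hub)

theorem graphS2_of_le_two_mul_add_one [NeZero n] (hdn : d < n) (h : n ≤ 2 * d + 1) :
    GraphS2 Γ :=
  isS2_of_card_le 1 (fun _ => card_le_of_mem_indComplex hdn (by omega)) fun _ _ _ => by omega

theorem graphS2_of_le_three_mul_add_two [NeZero n] (h₁ : 2 * d + 3 ≤ n)
    (h₂ : n ≤ 3 * d + 2) : GraphS2 Γ :=
  isS2_of_card_le 2 (fun _ => card_le_of_mem_indComplex (by omega) (by omega)) fun F _ hF => by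
    rw [Finset.card_eq_zero.mp (by omega : F.card = 0), linkC_empty]
    exact complexConnected_indComplex h₁

theorem graphS2_of_eq_four_mul_add_three [NeZero n] (h : n = 4 * d + 3) : GraphS2 Γ :=
  isS2_of_card_le 3 (fun _ => card_le_of_mem_indComplex (by omega) (by omega)) fun F _ hF => by
    rcases Nat.le_one_iff_eq_zero_or_eq_one.mp (by omega : F.card ≤ 1) with h₀ | h₁
    · rw [Finset.card_eq_zero.mp h₀, linkC_empty]
      exact complexConnected_indComplex (by omega)
    · obtain ⟨v, rfl⟩ := Finset.card_eq_one.mp h₁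
      exact complexConnected_linkC_singleton h v

theorem not_graphS2_of_eq_two_mul_add_two [NeZero n] (hd : 1 ≤ d) (hn : n = 2 * d + 2) :
    ¬ GraphS2 Γ := by
  obtain ⟨x, hx⟩ : ∃ x : ZMod n, x = ((d + 1 : ℕ) : ZMod n) := ⟨_, rfl⟩
  have hedge : skeletonAdj (IndComplex Γ) 0 x := by
    have := skeletonAdj_add_natCast (d := d) (0 : ZMod n) (c := d + 1) le_rfl (by omega)
    rwa [zero_add, ← hx] at this
  have hS : ∀ a ∈ ({0, x} : Set (ZMod n)), ∀ b, skeletonAdj (IndComplex Γ) a b →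
      b ∈ ({0, x} : Set (ZMod n)) := by
    rintro a ha b ⟨hab, hmem⟩
    obtain ⟨c, rfl, hc₁, hc₂⟩ :=
      exists_eq_add_natCast_of_not_adj hab ((pair_mem_indComplex_iff _).mp hmem)
    obtain rfl : c = d + 1 := by omega
    rcases ha with rfl | rfl
    · simp [hx]
    · left
      rw [hx, ← Nat.cast_add, show d + 1 + (d + 1) = n by omega, ZMod.natCast_self]
  have h₁ : (1 : ZMod n) ∉ ({0, x} : Set (ZMod n)) := by
    rw [hx, Set.mem_insert_iff, Set.mem_singleton_iff, ← Nat.cast_zero (R := ZMod n),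
      ← Nat.cast_one (R := ZMod n), ZMod.natCast_inj_of_lt, ZMod.natCast_inj_of_lt] <;> omega
  intro hS2
  have hconn := hS2 ∅ (by simp [IndComplex]) ⟨{0, x}, by rw [linkC_empty]; exact hedge.2,
    by rw [Finset.card_pair hedge.1]⟩
  rw [linkC_empty] at hconn
  exact not_complexConnected_of_closed (u := 0) (w := 1) {0, x} (by simp [IndComplex]) (by simp)
    (by simp [IndComplex]) h₁ hS hconn

theorem exists_adj_of_isSeparatedNet [NeZero n] {M : ℕ} {T : Finset ℕ}
    (hT : IsSeparatedNet d M T) (h₁ : M + 2 * d + 1 < n) (h₂ : n ≤ M + 4 * d + 2) {z : ZMod n}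
    (hz : z ∉ (insert (M + 2 * d + 1) T).image Nat.cast) :
    ∃ w ∈ (insert (M + 2 * d + 1) T).image Nat.cast, (Γ).Adj z w := by
  obtain ⟨m, hm, rfl⟩ : ∃ m < n, z = m := ⟨z.val, ZMod.val_lt z, (ZMod.natCast_zmod_val z).symm⟩
  have hne : ∀ q ∈ insert (M + 2 * d + 1) T, m ≠ q := fun q hq h =>
    hz (Finset.mem_image_of_mem _ (h ▸ hq))
  suffices ∃ q ∈ insert (M + 2 * d + 1) T, (Γ).Adj m q by
    obtain ⟨q, hq, hadj⟩ := this
    exact ⟨q, Finset.mem_image_of_mem _ hq, hadj⟩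
  have hT' : ∀ q ∈ T, q ∈ insert (M + 2 * d + 1) T := fun q => Finset.mem_insert_of_mem
  rcases le_or_gt m M with hm₁ | hm₁
  · obtain ⟨q, hq, hq₁, hq₂⟩ := hT.dense m hm₁
    have := hT.le_top q hq
    exact ⟨q, hT' q hq, adj_natCast_of_le hm (by omega) (hne q (hT' q hq)) hq₁ hq₂⟩
  rcases le_or_gt m (M + d) with hm₂ | hm₂
  · exact ⟨M, hT' M hT.top_mem,
      adj_natCast_of_le hm (by omega) (hne M (hT' M hT.top_mem)) (by omega) (by omega)⟩
  rcases le_or_gt m (M + 3 * d + 1) with hm₃ | hm₃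
  · exact ⟨_, Finset.mem_insert_self _ T,
      adj_natCast_of_le hm h₁ (hne _ (Finset.mem_insert_self _ T)) (by omega) (by omega)⟩
  · exact ⟨0, hT' 0 hT.zero_mem,
      ((adj_natCast_iff (by omega) hm).mpr (Or.inr (by omega))).symm⟩

theorem not_graphS2_of_isSeparatedNet [NeZero n] {M : ℕ} {T : Finset ℕ}
    (hT : IsSeparatedNet d M T) (h₁ : M + 3 * d + 3 ≤ n) (h₂ : n ≤ M + 4 * d + 2) :
    ¬ GraphS2 Γ := by
  have hA : (insert (M + 2 * d + 1) T).image Nat.cast ∈ IndComplex Γ := by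
    refine image_natCast_mem_indComplex ?_ ?_
    · simp only [Finset.mem_insert]
      rintro p (rfl | hp) q (rfl | hq) hpq
      · omega
      · have := hT.le_top q hq; omega
      · have := hT.le_top p hp; omega
      · exact hT.separated p hp q hq hpq
    · simp only [Finset.forall_mem_insert]
      exact ⟨by omega, fun q hq => by have := hT.le_top q hq; omega⟩
  have hB : (insert (M + d + 1) (insert (M + 2 * d + 2) T)).image Nat.cast ∈ IndComplex Γ := by
    refine image_natCast_mem_indComplex ?_ ?_
    · simp only [Finset.mem_insert]
      rintro p (rfl | rfl | hp) q (rfl | rfl | hq) hpq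
      all_goals first
        | omega
        | exact hT.separated p hp q hq hpq
        | (have := hT.le_top p hp; omega)
        | (have := hT.le_top q hq; omega)
    · simp only [Finset.forall_mem_insert]
      exact ⟨by omega, by omega, fun q hq => by have := hT.le_top q hq; omega⟩
  have hnotMem : ∀ x, M < x → x < n → (x : ZMod n) ∉ T.image Nat.cast := by
    intro x hMx hxn hx
    obtain ⟨q, hq, hqx⟩ := Finset.mem_image.mp hx
    have := hT.le_top q hq
    rw [ZMod.natCast_inj_of_lt (by omega) hxn] at hqx
    omega
  refine not_isS2_of_facet (isComplex_indComplex _)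
    (hnotMem (M + 2 * d + 1) (by omega) (by omega))
    (E := {((M + d + 1 : ℕ) : ZMod n), ((M + 2 * d + 2 : ℕ) : ZMod n)}) ?_ ⟨?_, ?_⟩ ?_
  · rw [← Finset.image_insert]
    exact mem_facetsOf_indComplex _ hA fun _ hz =>
      exists_adj_of_isSeparatedNet hT (by omega) h₂ hz
  · simp only [Finset.disjoint_insert_left, Finset.disjoint_singleton_left]
    exact ⟨hnotMem _ (by omega) (by omega), hnotMem _ (by omega) (by omega)⟩
  · simpa [Finset.image_insert, Finset.insert_union] using hB
  · rw [Finset.card_pair]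
    rw [Ne, ZMod.natCast_inj_of_lt] <;> omega

theorem not_graphS2_of_three_mul_add_three_le [NeZero n] (hd : 1 ≤ d)
    (h : 3 * d + 3 ≤ n) (h' : n ≠ 4 * d + 3) : ¬ GraphS2 Γ := by
  obtain ⟨M, hM, h₁, h₂⟩ :
      ∃ M, (M = 0 ∨ d + 1 ≤ M) ∧ M + 3 * d + 3 ≤ n ∧ n ≤ M + 4 * d + 2 := by
    rcases le_or_gt n (4 * d + 2) with hn | hn
    · exact ⟨0, Or.inl rfl, by omega, by omega⟩
    · refine ⟨n - (3 * d + 3), Or.inr ?_, ?_, ?_⟩ <;> omega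
  obtain ⟨T, hT⟩ := exists_isSeparatedNet d M hM
  exact not_graphS2_of_isSeparatedNet hT h₁ h₂

end circulantGraph

/-- Let `n ≥ 2d ≥ 2`. The circulant graph `C_n(1,2,…,d)` is `S₂` iff
(`n ≤ 3d+2` and `n ≠ 2d+2`) or `n = 4d+3`. -/
theorem circulant_powerOfCycle_S2_iff (n d : ℕ) (hd : 1 ≤ d) (hnd : 2 * d ≤ n) :
    GraphS2 (circulantGraph n (Set.Icc 1 d)) ↔
      (n ≤ 3 * d + 2 ∧ n ≠ 2 * d + 2) ∨ n = 4 * d + 3 := by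
  have : NeZero n := ⟨by omega⟩
  constructor
  · intro hS2
    by_contra h
    rcases (by omega : n = 2 * d + 2 ∨ 3 * d + 3 ≤ n ∧ n ≠ 4 * d + 3) with h₁ | ⟨h₁, h₂⟩
    · exact circulantGraph.not_graphS2_of_eq_two_mul_add_two hd h₁ hS2
    · exact circulantGraph.not_graphS2_of_three_mul_add_three_le hd h₁ h₂ hS2
  · rintro (⟨h₁, h₂⟩ | h₁)
    · rcases (by omega : n ≤ 2 * d + 1 ∨ 2 * d + 3 ≤ n) with h₃ | h₃
      · exact circulantGraph.graphS2_of_le_two_mul_add_one (by omega) h₃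
      · exact circulantGraph.graphS2_of_le_three_mul_add_two h₃ h₁
    · exact circulantGraph.graphS2_of_eq_four_mul_add_three h₁
end

section
/- Let n and d be integers with n > 3d and d > 1, let G = C_n(d+1, d+2, ..., ⌊n/2⌋), and let Δ = Ind(G). Then for every non-empty face F of Δ, the link link_Δ(F) is shellable. -/
/-!
Fix a vertex `a` of `F`. Every face containing `a` lies on the arc of `2d + 1` consecutive
vertices centred at `a`, and since `n > 3d` two vertices of that arc are non-adjacent exactly
when their distance along the arc is at most `d`. Cutting the cycle open therefore identifies
`link_Δ(F)` with the link of a non-empty set in the complex of finite subsets of `ℕ` of diameter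
at most `d`. There the facets of the link of `F` are the windows `[x, x + d] \ F` with
`max F - d ≤ x ≤ min F`, and listing them by increasing `x` is a shelling: each window adds the
single vertex `x + d`, which no earlier window contains.
-/

open Finset

section Shelling

variable {V W : Type*} {Δ : Set (Finset V)} {Δ' : Set (Finset W)}

theorem List.exists_map_eq_of_forall_mem {α β : Type*} {g : α → β} {l : List β}
    (h : ∀ b ∈ l, ∃ a, g a = b) : ∃ l' : List α, l'.map g = l := by
  induction l with
  | nil => exact ⟨[], rfl⟩
  | cons b l ih =>
    obtain ⟨a, rfl⟩ := h b mem_cons_self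
    obtain ⟨l', rfl⟩ := ih fun b hb => h b (mem_cons_of_mem _ hb)
    exact ⟨a :: l', rfl⟩

theorem isShellingOrder_map_range' [DecidableEq V] (X : ℕ → Finset V) (lo s : ℕ)
    (hfacets : ∀ G, G ∈ facetsOf Δ ↔ ∃ x, lo ≤ x ∧ x < lo + s ∧ X x = G)
    (hnew : ∀ y, lo < y → y < lo + s →
      ∃ v, X y \ X (y - 1) = {v} ∧ ∀ x, lo ≤ x → x < y → v ∉ X x) :
    IsShellingOrder Δ ((List.range' lo s).map X) := by
  have hget : ∀ i : Fin ((List.range' lo s).map X).length,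
      ((List.range' lo s).map X).get i = X (lo + i) := by
    intro i
    simp
  refine ⟨List.Nodup.map_on ?_ List.nodup_range', fun G => ?_, fun i j hij => ?_⟩
  · intro x hx y hy hxy
    rw [List.mem_range'_1] at hx hy
    by_contra hne
    wlog hlt : x < y generalizing x y
    · exact this y hy x hx hxy.symm (Ne.symm hne) (by omega)
    obtain ⟨v, hv, hvx⟩ := hnew y (by omega) hy.2
    exact hvx x hx.1 hlt (hxy ▸ (mem_sdiff.mp (hv ▸ mem_singleton_self v)).1)
  · simp only [hfacets, List.mem_map, List.mem_range'_1, and_assoc]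
  · have hj := j.isLt
    simp only [List.length_map, List.length_range'] at hj
    have hij' : (i : ℕ) < j := hij
    obtain ⟨v, hv, hvx⟩ := hnew (lo + j) (by omega) (by omega)
    refine ⟨v, ?_, ⟨j - 1, by simp; omega⟩, Fin.lt_def.mpr (by simp only; omega), ?_⟩
    · rw [hget, hget, mem_sdiff]
      exact ⟨(mem_sdiff.mp (hv ▸ mem_singleton_self v)).1, hvx _ (by omega) (by omega)⟩
    · rw [hget, hget, ← hv]
      congr 3
      dsimp only
      omega

theorem map_mem_facetsOf_iff (f : V ↪ W) (hmem : ∀ A : Finset V, A ∈ Δ ↔ A.map f ∈ Δ')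
    (hrange : ∀ B ∈ Δ', ∃ A : Finset V, A.map f = B) {A : Finset V} :
    A.map f ∈ facetsOf Δ' ↔ A ∈ facetsOf Δ := by
  simp only [facetsOf, Set.mem_ofPred_eq, ← hmem]
  refine and_congr_right fun _ => ⟨fun h G hG hAG => ?_, fun h B hB hAB => ?_⟩
  · exact map_injective f (h _ ((hmem G).mp hG) (map_subset_map.mpr hAG))
  · obtain ⟨G, rfl⟩ := hrange B hB
    rw [h G ((hmem G).mpr hB) (map_subset_map.mp hAB)]

theorem IsShellable.of_map [DecidableEq V] [DecidableEq W] (f : V ↪ W)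
    (hmem : ∀ A : Finset V, A ∈ Δ ↔ A.map f ∈ Δ')
    (hrange : ∀ B ∈ Δ', ∃ A : Finset V, A.map f = B) (h : IsShellable Δ') :
    IsShellable Δ := by
  obtain ⟨L', hnodup, hfacets, hshell⟩ := h
  obtain ⟨L, rfl⟩ := List.exists_map_eq_of_forall_mem (g := Finset.map f) fun B hB =>
    hrange B ((hfacets B).mpr hB).1
  refine ⟨L, hnodup.of_map _, fun A => ?_, fun i j hij => ?_⟩
  · rw [← map_mem_facetsOf_iff f hmem hrange, hfacets,
      List.mem_map_of_injective (map_injective f)]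
  · have hlen := L.length_map (Finset.map f)
    obtain ⟨v, hv, l, hl, hlv⟩ := hshell (i.cast hlen.symm) (j.cast hlen.symm) hij
    simp only [List.get_eq_getElem, List.getElem_map, Fin.val_cast, ← Finset.map_sdiff] at hv hlv
    obtain ⟨w, hw, rfl⟩ := mem_map.mp hv
    refine ⟨w, hw, l.cast hlen, hl, map_injective f ?_⟩
    simpa [List.get_eq_getElem] using hlv

end Shelling

def diamComplex (d : ℕ) : Set (Finset ℕ) :=
  {A | ∀ p ∈ A, ∀ q ∈ A, p ≤ q + d}

section DiamComplex

variable {d : ℕ} {F : Finset ℕ}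

theorem subset_Icc_min'_of_mem_diamComplex {A : Finset ℕ} (hA : A ∈ diamComplex d)
    (hne : A.Nonempty) : A ⊆ Icc (A.min' hne) (A.min' hne + d) := fun p hp =>
  mem_Icc.mpr ⟨min'_le A p hp, hA p hp _ (min'_mem A hne)⟩

theorem Icc_sdiff_mem_facetsOf_linkC {x : ℕ} (hF : F ⊆ Icc x (x + d)) :
    Icc x (x + d) \ F ∈ facetsOf (linkC (diamComplex d) F) := by
  refine ⟨⟨sdiff_disjoint, ?_⟩,
    fun G ⟨hGF, hG⟩ hsub => subset_antisymm hsub fun v hv => ?_⟩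
  · rw [sdiff_union_of_subset hF]
    intro p hp q hq
    simp only [mem_Icc] at hp hq
    omega
  · have hx : x ∈ G ∪ F := by
      by_cases hxF : x ∈ F
      · exact mem_union_right G hxF
      · exact mem_union_left F (hsub (mem_sdiff.mpr ⟨by simp, hxF⟩))
    have hxd : x + d ∈ G ∪ F := by
      by_cases hxF : x + d ∈ F
      · exact mem_union_right G hxF
      · exact mem_union_left F (hsub (mem_sdiff.mpr ⟨by simp, hxF⟩))
    have h₁ := hG v (mem_union_left F hv) x hx
    have h₂ := hG (x + d) hxd v (mem_union_left F hv)
    exact mem_sdiff.mpr ⟨mem_Icc.mpr ⟨by omega, h₁⟩, disjoint_left.mp hGF hv⟩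

theorem mem_facetsOf_linkC_diamComplex_iff (hne : F.Nonempty) {G : Finset ℕ} :
    G ∈ facetsOf (linkC (diamComplex d) F) ↔
      ∃ x, F ⊆ Icc x (x + d) ∧ Icc x (x + d) \ F = G := by
  refine ⟨fun ⟨⟨hGF, hG⟩, hmax⟩ => ?_,
    fun ⟨x, hF, hx⟩ => hx ▸ Icc_sdiff_mem_facetsOf_linkC hF⟩
  have hne' : (G ∪ F).Nonempty := hne.mono subset_union_right
  have hsub := subset_Icc_min'_of_mem_diamComplex hG hne'
  refine ⟨_, subset_union_right.trans hsub, (hmax _ ?_ fun v hv => ?_).symm⟩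
  · exact (Icc_sdiff_mem_facetsOf_linkC (subset_union_right.trans hsub)).1
  · exact mem_sdiff.mpr ⟨hsub (mem_union_left F hv), disjoint_left.mp hGF hv⟩

theorem subset_Icc_iff_of_nonempty (hne : F.Nonempty) {x y : ℕ} :
    F ⊆ Icc x y ↔ x ≤ F.min' hne ∧ F.max' hne ≤ y := by
  simp only [le_min'_iff, max'_le_iff, subset_iff, mem_Icc, forall_and]

theorem isShellable_linkC_diamComplex (hF : F ∈ diamComplex d) (hne : F.Nonempty) :
    IsShellable (linkC (diamComplex d) F) := by
  have hMm : F.max' hne ≤ F.min' hne + d := hF _ (max'_mem F hne) _ (min'_mem F hne)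
  refine ⟨_, isShellingOrder_map_range' (fun x => Icc x (x + d) \ F) (F.max' hne - d)
    (F.min' hne + 1 - (F.max' hne - d)) (fun G => ?_)
    fun y hy₁ hy₂ => ⟨y + d, ?_, fun x _ hxy => ?_⟩⟩
  · simp only [mem_facetsOf_linkC_diamComplex_iff hne, subset_Icc_iff_of_nonempty hne]
    exact exists_congr fun x => by rw [← and_assoc]; exact and_congr_left' (by omega)
  · have hyF : y + d ∉ F := fun h => by have := le_max' F _ h; omega
    ext t
    simp only [mem_sdiff, mem_Icc, mem_singleton]
    refine ⟨fun ⟨⟨⟨ht₁, ht₂⟩, htF⟩, hprev⟩ => ?_, ?_⟩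
    · by_contra hty
      exact hprev ⟨⟨by omega, by omega⟩, htF⟩
    · rintro rfl
      exact ⟨⟨⟨by omega, le_rfl⟩, hyF⟩, fun h => by have := h.1; omega⟩
  · simp only [mem_sdiff, mem_Icc]
    omega

end DiamComplex

namespace ZMod

variable {n : ℕ} [NeZero n]

theorem val_sub_add_val (x y : ZMod n) :
    (x - y).val + y.val = x.val ∨ (x - y).val + y.val = x.val + n := by
  by_cases h : n ≤ (x - y).val + y.val
  · exact Or.inr (by rw [val_add_val_of_le h, sub_add_cancel])
  · exact Or.inl (by rw [← val_add_of_lt (not_le.mp h), sub_add_cancel])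

/-- The position of `v` on the cycle when the cycle is cut open at `-c`. -/
def shiftVal (c : ZMod n) : ZMod n ↪ ℕ :=
  ⟨fun v => (v + c).val, fun _ _ h => add_right_cancel (val_injective n h)⟩

theorem shiftVal_apply (c v : ZMod n) : shiftVal c v = (v + c).val := rfl

theorem exists_map_shiftVal_eq (c : ZMod n) {B : Finset ℕ} (hB : ∀ t ∈ B, t < n) :
    ∃ A : Finset (ZMod n), A.map (shiftVal c) = B := by
  obtain ⟨A, -, hA⟩ := (subset_map_iff (f := shiftVal c) (t := univ)).mp fun p hp =>
    mem_map.mpr ⟨(p : ZMod n) - c, mem_univ _,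
      by rw [shiftVal_apply, sub_add_cancel, val_natCast_of_lt (hB p hp)]⟩
  exact ⟨A, hA.symm⟩

end ZMod

section Circulant

open ZMod

variable {n d : ℕ} [NeZero n]

theorem circulantGraph_Icc_adj_iff {u v : ZMod n} :
    (circulantGraph n (Set.Icc (d + 1) (n / 2))).Adj u v ↔
      d < (u - v).val ∧ d < (v - u).val := by
  by_cases huv : u = v
  · simp [circulantGraph, huv]
  have hne : u - v ≠ 0 := sub_ne_zero.mpr huv
  have hpos : (u - v).val ≠ 0 := mt (ZMod.val_eq_zero _).mp hne
  have hneg : (v - u).val = n - (u - v).val := by rw [← neg_sub, neg_val, if_neg hne]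
  have hlt := val_lt (u - v)
  simp only [circulantGraph, huv, ne_eq, not_false_eq_true, true_and, Set.mem_Icc]
  omega

theorem circulantGraph_Icc_not_adj_iff (hn : 3 * d < n) {c u v : ZMod n}
    (hu : (u + c).val ≤ 2 * d) (hv : (v + c).val ≤ 2 * d) :
    ¬ (circulantGraph n (Set.Icc (d + 1) (n / 2))).Adj u v ↔
      (u + c).val ≤ (v + c).val + d ∧ (v + c).val ≤ (u + c).val + d := by
  have h₁ := val_sub_add_val (u + c) (v + c)
  have h₂ := val_sub_add_val (v + c) (u + c)
  simp only [add_sub_add_right_eq_sub] at h₁ h₂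
  have := val_lt (u - v)
  have := val_lt (v - u)
  rw [circulantGraph_Icc_adj_iff]
  omega

theorem val_add_le_of_circulantGraph_Icc_not_adj (hn : 2 * d < n) {c u v : ZMod n}
    (hv : (v + c).val = d) (h : ¬ (circulantGraph n (Set.Icc (d + 1) (n / 2))).Adj u v) :
    (u + c).val ≤ 2 * d := by
  have h₁ := val_sub_add_val (u + c) (v + c)
  have h₂ := val_sub_add_val (v + c) (u + c)
  simp only [add_sub_add_right_eq_sub] at h₁ h₂
  have := val_lt (u + c)
  rw [circulantGraph_Icc_adj_iff] at h
  omega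

theorem mem_indComplex_circulantGraph_Icc_iff (hn : 3 * d < n) {a : ZMod n}
    {A : Finset (ZMod n)} (ha : a ∈ A) :
    A ∈ IndComplex (circulantGraph n (Set.Icc (d + 1) (n / 2))) ↔
      A.map (shiftVal ((d : ZMod n) - a)) ∈ diamComplex d := by
  have hc : (a + ((d : ZMod n) - a)).val = d := by
    rw [add_sub_cancel, val_natCast_of_lt (by omega)]
  simp only [IndComplex, diamComplex, Set.mem_ofPred_eq, forall_mem_map, shiftVal_apply]
  constructor
  · intro h u hu v hv
    have hu' := val_add_le_of_circulantGraph_Icc_not_adj (by omega) hc (h u hu a ha)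
    have hv' := val_add_le_of_circulantGraph_Icc_not_adj (by omega) hc (h v hv a ha)
    exact ((circulantGraph_Icc_not_adj_iff hn hu' hv').mp (h u hu v hv)).1
  · intro h u hu v hv
    have hu' := h u hu a ha
    have hv' := h v hv a ha
    rw [hc] at hu' hv'
    exact (circulantGraph_Icc_not_adj_iff hn (by omega) (by omega)).mpr
      ⟨h u hu v hv, h v hv u hu⟩

end Circulant

theorem circulant_upper_links_shellable_general (n d : ℕ) (hn : 3 * d < n)
    (Δ : Set (Finset (ZMod n)))
    (hΔ : Δ = IndComplex (circulantGraph n (Set.Icc (d + 1) (n / 2)))) :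
    ∀ F ∈ Δ, F ≠ ∅ → IsShellable (linkC Δ F) := by
  subst hΔ
  intro F hF hFne
  have : NeZero n := ⟨by omega⟩
  obtain ⟨a, ha⟩ := nonempty_iff_ne_empty.mpr hFne
  set f := ZMod.shiftVal ((d : ZMod n) - a)
  have hmem : ∀ A, F ⊆ A → (A ∈ IndComplex _ ↔ A.map f ∈ diamComplex d) := fun A hA =>
    mem_indComplex_circulantGraph_Icc_iff hn (hA ha)
  refine IsShellable.of_map f (fun G => ?_) (fun B hB => ZMod.exists_map_shiftVal_eq _ ?_)
    (isShellable_linkC_diamComplex ((hmem F subset_rfl).mp hF) (map_nonempty.mpr ⟨a, ha⟩))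
  · simp only [linkC, Set.mem_ofPred_eq, disjoint_map, ← map_union, hmem _ subset_union_right]
  · have hfa : f a = d := by
      simp [f, ZMod.shiftVal_apply, ZMod.val_natCast_of_lt (show d < n by omega)]
    intro t ht
    have := hB.2 t (mem_union_left _ ht) (f a) (mem_union_right _ (mem_map_of_mem f ha))
    omega

/-- For `n > 3d`, `d > 1`, and `Δ = Ind(C_n(d+1, …, ⌊n/2⌋))`, the link of every
non-empty face of `Δ` is shellable. -/
theorem circulant_upper_links_shellable (n d : ℕ) (hd : 1 < d) (hn : 3 * d < n)
    (Δ : Set (Finset (ZMod n)))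
    (hΔ : Δ = IndComplex (circulantGraph n (Set.Icc (d + 1) (n / 2)))) :
    ∀ F ∈ Δ, F ≠ ∅ → IsShellable (linkC Δ F) :=
  circulant_upper_links_shellable_general n d hn Δ hΔ
end

section
/- Let a ≥ 1 and b ≥ 2 be integers and n a positive integer with ab | n, and let G = C(n; a, b) be the one-paired circulant graph. Then G satisfies Serre's condition S_2 if and only if n = ab. -/
/-!
Since `ab ∣ n`, two vertices of `C(n; a, b)` are adjacent iff they agree mod `a` but not mod `ab`:
each residue class mod `a` spans a complete multipartite graph whose parts are the residue classes
mod `ab` inside it. If `n = ab` all parts are singletons, so every link in the independence complex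
is a join of discrete sets, one per residue class mod `a` it still meets, and a link of dimension
at least one is such a join with at least two factors, hence connected. If `n > ab`, take one
whole part in each class mod `a` other than that of `0`: the link of this independent set is the
independence complex of the class of `0`, a disjoint union of `b ≥ 2` simplices on
`n / (ab) ≥ 2` vertices each, which is disconnected.
-/

section IndComplex

variable {V : Type*} {G : SimpleGraph V}

lemma singleton_mem_indComplex (x : V) : ({x} : Finset V) ∈ IndComplex G := by
  simp [IndComplex]

lemma union_mem_indComplex [DecidableEq V] {A B : Finset V} (hA : A ∈ IndComplex G)
    (hB : B ∈ IndComplex G) (hAB : ∀ x ∈ A, ∀ y ∈ B, ¬ G.Adj x y) :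
    A ∪ B ∈ IndComplex G := by
  intro x hx y hy
  rcases Finset.mem_union.1 hx with hx | hx <;> rcases Finset.mem_union.1 hy with hy | hy
  · exact hA x hx y hy
  · exact hAB x hx y hy
  · exact fun h => hAB y hy x hx h.symm
  · exact hB x hx y hy

variable [DecidableEq V] {F S : Finset V} {x y : V}

lemma not_adj_of_mem_linkC_indComplex (hS : S ∈ linkC (IndComplex G) F) (hx : x ∈ S)
    (hy : y ∈ S) : ¬ G.Adj x y :=
  hS.2 x (Finset.mem_union_left _ hx) y (Finset.mem_union_left _ hy)

lemma singleton_mem_linkC_of_mem (hS : S ∈ linkC (IndComplex G) F) (hx : x ∈ S) :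
    ({x} : Finset V) ∈ linkC (IndComplex G) F := by
  have hxS : {x} ⊆ S := Finset.singleton_subset_iff.2 hx
  exact ⟨Finset.disjoint_of_subset_left hxS hS.1,
    fun u hu v hv => hS.2 u (Finset.union_subset_union_left hxS hu)
      v (Finset.union_subset_union_left hxS hv)⟩

lemma pair_mem_linkC_indComplex (hx : ({x} : Finset V) ∈ linkC (IndComplex G) F)
    (hy : ({y} : Finset V) ∈ linkC (IndComplex G) F) (hxy : ¬ G.Adj x y) :
    ({x, y} : Finset V) ∈ linkC (IndComplex G) F := by
  refine ⟨Finset.disjoint_insert_left.2 ⟨Finset.disjoint_singleton_left.1 hx.1, hy.1⟩, ?_⟩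
  rw [Finset.insert_eq, Finset.union_assoc]
  refine union_mem_indComplex (singleton_mem_indComplex x) hy.2 ?_
  simp only [Finset.mem_singleton, forall_eq]
  intro z hz
  rcases Finset.mem_union.1 hz with hz | hz
  · rwa [Finset.mem_singleton.1 hz]
  · exact hx.2 _ (Finset.mem_union_left _ (Finset.mem_singleton_self x))
      z (Finset.mem_union_right _ hz)

end IndComplex

lemma ComplexConnected.apply_eq_of_edges {V α : Type*} [DecidableEq V] {Δ : Set (Finset V)}
    (hΔ : ComplexConnected Δ) {f : V → α}
    (hf : ∀ x y, x ≠ y → ({x, y} : Finset V) ∈ Δ → f x = f y) {u w : V}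
    (hu : ({u} : Finset V) ∈ Δ) (hw : ({w} : Finset V) ∈ Δ) : f u = f w := by
  have hpath := hΔ u hu w hw
  clear hw
  induction hpath with
  | refl => rfl
  | tail _ hxy ih => exact ih.trans (hf _ _ hxy.1 hxy.2)

def fiberMultipartiteGraph {V A B : Type*} (ψ : V → A) (φ : V → B) : SimpleGraph V where
  Adj u v := ψ u = ψ v ∧ φ u ≠ φ v
  symm := ⟨fun _ _ h => ⟨h.1.symm, h.2.symm⟩⟩
  loopless := ⟨fun _ h => h.2 rfl⟩

section FiberMultipartite

variable {V A B : Type*} [DecidableEq V] (ψ : V → A) {φ : V → B}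

theorem graphS2_fiberMultipartiteGraph_of_injective (hφ : Function.Injective φ) :
    GraphS2 (fiberMultipartiteGraph ψ φ) := by
  set G := fiberMultipartiteGraph ψ φ
  rintro F - ⟨S, hS, hcard⟩
  obtain ⟨p, hp, q, hq, hpq⟩ := Finset.one_lt_card.1 hcard
  have hψpq : ψ p ≠ ψ q := fun h =>
    not_adj_of_mem_linkC_indComplex hS hp hq ⟨h, hφ.ne hpq⟩
  have hedge : ∀ x y, ({x} : Finset V) ∈ linkC (IndComplex G) F →
      ({y} : Finset V) ∈ linkC (IndComplex G) F → ψ x ≠ ψ y →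
      x ≠ y ∧ ({x, y} : Finset V) ∈ linkC (IndComplex G) F :=
    fun x y hx hy h => ⟨ne_of_apply_ne ψ h, pair_mem_linkC_indComplex hx hy (h ·.1)⟩
  intro x hx y hy
  by_cases hxy : ψ x = ψ y
  · obtain ⟨r, hr, hψr⟩ :
        ∃ r, ({r} : Finset V) ∈ linkC (IndComplex G) F ∧ ψ r ≠ ψ x := by
      by_cases hpx : ψ p = ψ x
      · exact ⟨q, singleton_mem_linkC_of_mem hS hq, fun h => hψpq (hpx.trans h.symm)⟩
      · exact ⟨p, singleton_mem_linkC_of_mem hS hp, hpx⟩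
    exact .head (hedge x r hx hr (Ne.symm hψr)) (.single (hedge r y hr hy (hxy ▸ hψr)))
  · exact .single (hedge x y hx hy hxy)

theorem not_graphS2_fiberMultipartiteGraph [Fintype V] {u v w : V} (huv : u ≠ v)
    (hψv : ψ v = ψ u) (hφv : φ v = φ u) (hψw : ψ w = ψ u) (hφw : φ w ≠ φ u) :
    ¬ GraphS2 (fiberMultipartiteGraph ψ φ) := by
  classical
  intro hS2
  set G := fiberMultipartiteGraph ψ φ
  have : Nonempty V := ⟨u⟩
  set rep : V → V := fun x => Function.invFun ψ (ψ x)
  have hψrep : ∀ x, ψ (rep x) = ψ x := fun x => Function.invFun_eq ⟨x, rfl⟩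
  have hrep : ∀ {x y}, ψ x = ψ y → rep x = rep y := fun h => by simp only [rep, h]
  set F : Finset V := Finset.univ.filter fun x => ψ x ≠ ψ u ∧ φ x = φ (rep x)
  have hmemF : ∀ x, x ∈ F ↔ ψ x ≠ ψ u ∧ φ x = φ (rep x) := by simp [F]
  have hF : F ∈ IndComplex G := by
    intro x hx y hy hxy
    exact hxy.2 (((hmemF x).1 hx).2.trans (hrep hxy.1 ▸ ((hmemF y).1 hy).2.symm))
  have hlink : ∀ S : Finset V, (∀ x ∈ S, ψ x = ψ u) → S ∈ IndComplex G →
      S ∈ linkC (IndComplex G) F := by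
    intro S hSu hS
    refine ⟨Finset.disjoint_left.2 fun x hxS hxF => ((hmemF x).1 hxF).1 (hSu x hxS),
      union_mem_indComplex hS hF fun x hx y hy hxy => ?_⟩
    exact ((hmemF y).1 hy).1 (hxy.1.symm.trans (hSu x hx))
  -- `F` contains a whole `φ`-fibre of every other `ψ`-class, so it leaves no vertex there
  have hvert : ∀ x, ({x} : Finset V) ∈ linkC (IndComplex G) F → ψ x = ψ u := by
    intro x hx
    by_contra hxu
    have hrepF : rep x ∈ F := (hmemF _).2 ⟨(hψrep x).trans_ne hxu, by rw [hrep (hψrep x)]⟩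
    by_cases hφx : φ x = φ (rep x)
    · exact Finset.disjoint_singleton_left.1 hx.1 ((hmemF x).2 ⟨hxu, hφx⟩)
    · exact hx.2 x (Finset.mem_union_left _ (Finset.mem_singleton_self x))
        _ (Finset.mem_union_right _ hrepF) ⟨(hψrep x).symm, hφx⟩
  have hedge : ∀ x y, x ≠ y → ({x, y} : Finset V) ∈ linkC (IndComplex G) F →
      φ x = φ y := by
    intro x y _ hxy
    have hx : x ∈ ({x, y} : Finset V) := Finset.mem_insert_self x {y}
    have hy : y ∈ ({x, y} : Finset V) := Finset.mem_insert_of_mem (Finset.mem_singleton_self y)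
    have hψx := hvert x (singleton_mem_linkC_of_mem hxy hx)
    have hψy := hvert y (singleton_mem_linkC_of_mem hxy hy)
    by_contra hφ
    exact not_adj_of_mem_linkC_indComplex hxy hx hy ⟨hψx.trans hψy.symm, hφ⟩
  have hpair : ({u, v} : Finset V) ∈ linkC (IndComplex G) F := by
    have hφuv : ∀ z ∈ ({u, v} : Finset V), φ z = φ u := by simp [hφv]
    exact hlink _ (by simp [hψv])
      fun x hx y hy hxy => hxy.2 ((hφuv x hx).trans (hφuv y hy).symm)
  have hconn := hS2 F hF ⟨_, hpair, (Finset.card_pair huv).ge⟩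
  exact hφw (hconn.apply_eq_of_edges hedge
    (hlink _ (by simp [hψw]) (singleton_mem_indComplex w))
    (hlink _ (by simp) (singleton_mem_indComplex u)))

end FiberMultipartite

section OnePaired

variable {n : ℕ} [NeZero n]

lemma ZMod.dvd_val_iff_castHom_eq_zero {m : ℕ} (h : m ∣ n) (x : ZMod n) :
    m ∣ x.val ↔ ZMod.castHom h (ZMod m) x = 0 := by
  rw [ZMod.castHom_apply, ← ZMod.natCast_val, ZMod.natCast_eq_zero_iff]

lemma ZMod.val_le_half_or_neg_val_le_half (x : ZMod n) :
    x.val ≤ n / 2 ∨ (-x).val ≤ n / 2 := by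
  have := x.val_lt
  rw [ZMod.neg_val]
  split_ifs <;> omega

theorem circulantGraph_onePairedSet_eq {a b : ℕ} (hab : a * b ∣ n) :
    circulantGraph n (onePairedSet n a b) =
      fiberMultipartiteGraph (ZMod.castHom (dvd_of_mul_right_dvd hab) (ZMod a))
        (ZMod.castHom hab (ZMod (a * b))) := by
  ext i j
  simp only [circulantGraph, fiberMultipartiteGraph, onePairedSet, Set.mem_ofPred_eq,
    ZMod.dvd_val_iff_castHom_eq_zero (dvd_of_mul_right_dvd hab),
    ZMod.dvd_val_iff_castHom_eq_zero hab, ← neg_sub i j, Nat.one_le_iff_ne_zero, ne_eq,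
    ZMod.val_eq_zero, sub_eq_zero, map_sub]
  constructor
  · rintro ⟨-, ⟨-, -, hψ, hφ⟩ | ⟨-, -, hψ, hφ⟩⟩
    exacts [⟨hψ, hφ⟩, ⟨hψ.symm, Ne.symm hφ⟩]
  · rintro ⟨hψ, hφ⟩
    have hij : i ≠ j := fun h => hφ (h ▸ rfl)
    exact ⟨hij, ((i - j).val_le_half_or_neg_val_le_half).imp (⟨hij, ·, hψ, hφ⟩)
      (⟨Ne.symm hij, ·, hψ.symm, Ne.symm hφ⟩)⟩

end OnePaired

/-- The one-paired circulant graph `C(n; a, b)` (with `a ≥ 1`, `b ≥ 2`, `ab ∣ n`, `n > 0`)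
is `S₂` iff `n = ab`. -/
theorem onePaired_S2_iff (n a b : ℕ) (ha : 1 ≤ a) (hb : 2 ≤ b) (hn : 0 < n)
    (hab : a * b ∣ n) :
    GraphS2 (circulantGraph n (onePairedSet n a b)) ↔ n = a * b := by
  have : NeZero n := ⟨hn.ne'⟩
  rw [circulantGraph_onePairedSet_eq hab]
  constructor
  · intro hS2
    by_contra hne
    have hab_lt : a * b < n := (Nat.le_of_dvd hn hab).lt_of_ne (Ne.symm hne)
    have ha_lt : a < a * b := lt_mul_of_one_lt_right ha hb
    -- `0` and `ab` lie in one part, `a` in another part of the same component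
    refine not_graphS2_fiberMultipartiteGraph _ (u := 0) (v := ((a * b : ℕ) : ZMod n))
      (w := (a : ZMod n)) ?_ ?_ ?_ ?_ ?_ hS2
    · rw [ne_comm, Ne, ZMod.natCast_eq_zero_iff]
      exact Nat.not_dvd_of_pos_of_lt (by omega) hab_lt
    · rw [map_natCast, map_zero, Nat.cast_mul, ZMod.natCast_self, zero_mul]
    · rw [map_natCast, map_zero, ZMod.natCast_self]
    · rw [map_natCast, map_zero, ZMod.natCast_self]
    · rw [map_natCast, map_zero, Ne, ZMod.natCast_eq_zero_iff]
      exact Nat.not_dvd_of_pos_of_lt ha ha_lt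
  · rintro rfl
    exact graphS2_fiberMultipartiteGraph_of_injective _ (ZMod.castHom_injective _)
end
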